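/- In the quantum divided power algebra 𝒜_q(m) with basis {x^{(β)} : β ∈ ℤ₊^m} and product x^{(β)} x^{(γ)} = q^{β∗γ} [β+γ choose β]_q x^{(β+γ)}, the multiplication is associative. -/

import Mathlib

open Finset

/-- The balanced Gaussian binomial coefficient `[m choose r]_q`. -/
noncomputable def qbinom {K : Type*} [Field K] (q : K) : ℕ → ℕ → K
  | _, 0 => 1
  | 0, _ + 1 => 0
  | m + 1, r + 1 =>
      q ^ ((r : ℤ) - (m : ℤ)) * qbinom q m r + q ^ ((r : ℤ) + 1) * qbinom q m (r + 1)

/-- The multi-index Gaussian binomial `[β+γ choose β]_q = ∏ᵢ [βᵢ+γᵢ choose βᵢ]_q`. -/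
noncomputable def qmb {K : Type*} [Field K] (q : K) {m : ℕ} (β γ : Fin m → ℕ) : K :=
  ∏ i, qbinom q (β i + γ i) (β i)

/-- The bi-additive pairing `β ∗ γ = ∑_{i > j} βᵢ γⱼ`. -/
def pstar {m : ℕ} (β γ : Fin m → ℕ) : ℕ :=
  ∑ i : Fin m, ∑ j : Fin m, if (j : ℕ) < (i : ℕ) then β i * γ j else 0

/-- Multiplication of the quantum divided power algebra `𝒜_q(m)` on the free module
with basis `{x^{(β)} : β ∈ ℤ₊^m}`, given by
`x^{(β)} x^{(γ)} = q^{β∗γ} [β+γ choose β]_q x^{(β+γ)}`. -/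
noncomputable def dpMul {K : Type*} [Field K] (q : K) {m : ℕ}
    (f g : (Fin m → ℕ) →₀ K) : (Fin m → ℕ) →₀ K :=
  f.sum fun β a => g.sum fun γ b =>
    Finsupp.single (β + γ) (a * b * q ^ pstar β γ * qmb q β γ)

/-! ### Generic `q`-binomials attached to a unit in a commutative ring -/

section U
variable {R : Type*} [CommRing R] (u : Rˣ)

noncomputable def qintU (n : ℕ) : R :=
  ∑ i ∈ Finset.range n, ((u ^ ((n : ℤ) - 1 - 2 * (i : ℤ)) : Rˣ) : R)

noncomputable def qfactU : ℕ → R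
  | 0 => 1
  | n + 1 => qintU u (n + 1) * qfactU n

noncomputable def qbinomU : ℕ → ℕ → R
  | _, 0 => 1
  | 0, _ + 1 => 0
  | m + 1, r + 1 =>
      ((u ^ ((r : ℤ) - (m : ℤ)) : Rˣ) : R) * qbinomU m r
        + ((u ^ ((r : ℤ) + 1) : Rˣ) : R) * qbinomU m (r + 1)

lemma qintU_add (a b : ℕ) :
    qintU u (a + b) = ((u ^ (b : ℤ) : Rˣ) : R) * qintU u a
      + ((u ^ (-(a : ℤ)) : Rˣ) : R) * qintU u b := by
  unfold qintU
  rw [Finset.range_add, Finset.sum_union (by simp [Finset.disjoint_left]; omega),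
    Finset.sum_map, Finset.mul_sum, Finset.mul_sum]
  congr 1
  · apply Finset.sum_congr rfl; intro i hi
    rw [← Units.val_mul, ← zpow_add]
    congr 2; push_cast; ring
  · apply Finset.sum_congr rfl; intro i hi
    rw [← Units.val_mul, ← zpow_add]
    simp only [addLeftEmbedding_apply]
    congr 2; push_cast; ring

@[simp] lemma qbinomU_zero_right (n : ℕ) : qbinomU u n 0 = 1 := by
  cases n <;> rfl

lemma qbinomU_eq_zero {n k : ℕ} (h : n < k) : qbinomU u n k = 0 := by
  induction n generalizing k with
  | zero => obtain ⟨k, rfl⟩ := Nat.exists_eq_add_of_lt h; rfl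
  | succ m ih =>
      obtain ⟨r, rfl⟩ : ∃ r, k = r + 1 := ⟨k - 1, by omega⟩
      rw [qbinomU]
      rw [ih (by omega), ih (by omega)]
      ring

@[simp] lemma qbinomU_self (n : ℕ) : qbinomU u n n = 1 := by
  induction n with
  | zero => rfl
  | succ m ih =>
      rw [qbinomU, ih, qbinomU_eq_zero u (by omega)]
      simp

lemma qbinomU_mul_qfact (a b : ℕ) :
    qbinomU u (a + b) a * qfactU u a * qfactU u b = qfactU u (a + b) := by
  suffices H : ∀ n a b, a + b = n →
      qbinomU u (a + b) a * qfactU u a * qfactU u b = qfactU u (a + b) by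
    exact H (a + b) a b rfl
  intro n
  induction n using Nat.strong_induction_on with
  | _ n ih =>
  intro a b h
  match a, b with
  | 0, b => simp [qfactU]
  | a + 1, 0 => simp [qfactU]
  | a + 1, b + 1 =>
    have h1 : a + 1 + (b + 1) = (a + (b + 1)) + 1 := by omega
    rw [h1, qbinomU]
    have e1 : qbinomU u (a + (b + 1)) a * qfactU u a * qfactU u (b+1) = qfactU u (a + (b+1)) :=
      ih _ (by omega) a (b+1) rfl
    have e2 : qbinomU u ((a+1) + b) (a+1) * qfactU u (a+1) * qfactU u b = qfactU u ((a+1) + b) :=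
      ih _ (by omega) (a+1) b rfl
    have hn : a + (b + 1) = (a + 1) + b := by omega
    have hfa : qfactU u (a+1) = qintU u (a+1) * qfactU u a := rfl
    have hfb : qfactU u (b+1) = qintU u (b+1) * qfactU u b := rfl
    have key0 : qintU u ((a+1) + (b+1)) = ((u ^ (((a+1 : ℕ)) : ℤ) : Rˣ) : R) * qintU u (b+1)
        + ((u ^ (-((b+1 : ℕ) : ℤ)) : Rˣ) : R) * qintU u (a+1) := by
      rw [show (a+1) + (b+1) = (b+1) + (a+1) from by omega]
      exact qintU_add u (b+1) (a+1)
    have key : ((u ^ ((a : ℤ) - (a + (b+1) : ℕ)) : Rˣ) : R) * qintU u (a+1)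
        + ((u ^ ((a : ℤ) + 1) : Rˣ) : R) * qintU u (b+1) = qintU u ((a+1) + (b+1)) := by
      rw [key0,
        show ((a:ℤ) - ((a + (b+1) : ℕ) : ℤ)) = -(((b+1) : ℕ) : ℤ) by push_cast; ring,
        show ((a:ℤ) + 1) = (((a+1) : ℕ) : ℤ) by push_cast; ring]
      ring
    calc (((u ^ ((a : ℤ) - (a + (b+1) : ℕ)) : Rˣ) : R) * qbinomU u (a + (b+1)) a
            + ((u ^ ((a : ℤ) + 1) : Rˣ) : R) * qbinomU u (a + (b+1)) (a+1)) *
          qfactU u (a+1) * qfactU u (b+1)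
        = ((u ^ ((a : ℤ) - (a + (b+1) : ℕ)) : Rˣ) : R) * qintU u (a+1) *
            (qbinomU u (a + (b+1)) a * qfactU u a * qfactU u (b+1))
          + ((u ^ ((a : ℤ) + 1) : Rˣ) : R) * qintU u (b+1) *
            (qbinomU u ((a+1) + b) (a+1) * qfactU u (a+1) * qfactU u b) := by
          rw [hfa, hfb, ← hn]; ring
      _ = (((u ^ ((a : ℤ) - (a + (b+1) : ℕ)) : Rˣ) : R) * qintU u (a+1)
          + ((u ^ ((a : ℤ) + 1) : Rˣ) : R) * qintU u (b+1)) * qfactU u (a + (b+1)) := by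
          rw [e1, e2, ← hn]; ring
      _ = qintU u ((a + (b+1)) + 1) * qfactU u (a + (b+1)) := by
          rw [key, show (a+1) + (b+1) = (a + (b+1)) + 1 by omega]
      _ = qfactU u ((a + (b+1)) + 1) := rfl

lemma qbinomU_map {S : Type*} [CommRing S] (f : R →+* S) (n k : ℕ) :
    qbinomU (Units.map (f : R →* S) u) n k = f (qbinomU u n k) := by
  induction n generalizing k with
  | zero =>
      cases k with
      | zero => simp
      | succ k => simp [qbinomU]
  | succ m ih =>
      cases k with
      | zero => simp
      | succ r =>
          rw [qbinomU, qbinomU, map_add, map_mul, map_mul, ih, ih]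
          congr 2 <;>
          · rw [← map_zpow, Units.coe_map]; rfl
end U

/-! ### The Laurent polynomial ring and its distinguished unit -/

open LaurentPolynomial

noncomputable def uT : (LaurentPolynomial ℤ)ˣ := (LaurentPolynomial.isUnit_T (R := ℤ) 1).unit

@[simp] lemma uT_val : (uT : LaurentPolynomial ℤ) = LaurentPolynomial.T 1 := IsUnit.unit_spec _

lemma uT_inv_val :
    ((uT⁻¹ : (LaurentPolynomial ℤ)ˣ) : LaurentPolynomial ℤ) = LaurentPolynomial.T (-1) := by
  apply Units.inv_eq_of_mul_eq_one_right
  rw [uT_val, ← T_add]; norm_num [T_zero]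

lemma uT_zpow (z : ℤ) :
    ((uT ^ z : (LaurentPolynomial ℤ)ˣ) : LaurentPolynomial ℤ) = LaurentPolynomial.T z := by
  induction z using Int.induction_on with
  | zero => norm_num [T_zero]
  | succ n ih => rw [zpow_add_one, Units.val_mul, ih, T_add, uT_val]
  | pred n ih => rw [zpow_sub_one, Units.val_mul, ih,
      show (-(n:ℤ)-1 : ℤ) = -(n:ℤ) + (-1) from by ring, T_add, uT_inv_val]

lemma qintT_ne_zero (n : ℕ) (hn : 0 < n) : (qintU uT n : LaurentPolynomial ℤ) ≠ 0 := by
  unfold qintU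
  simp only [uT_zpow]
  intro h
  have h1 : (∑ i ∈ Finset.range n,
      LaurentPolynomial.T ((n : ℤ) - 1 - 2 * (i : ℤ)) : LaurentPolynomial ℤ).coeff ((n : ℤ) - 1) = 0 := by
    rw [h]; rfl
  rw [AddMonoidAlgebra.coeff_sum, Finsupp.finset_sum_apply] at h1
  simp only [LaurentPolynomial.T, AddMonoidAlgebra.coeff_single, Finsupp.single_apply] at h1
  rw [Finset.sum_congr rfl (fun x _ => by
      split_ifs with h2 h3 h3 <;> first | rfl | omega :
      ∀ x ∈ Finset.range n, ((if ((n : ℤ) - 1 - 2 * (x:ℤ)) = ((n : ℤ) - 1) then (1:ℤ) else 0)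
        = if x = 0 then (1:ℤ) else 0)),
    Finset.sum_ite_eq' (Finset.range n) 0 (fun _ => (1:ℤ))] at h1
  rw [if_pos (Finset.mem_range.2 hn)] at h1
  exact one_ne_zero h1

lemma qfactT_ne_zero (n : ℕ) : (qfactU uT n : LaurentPolynomial ℤ) ≠ 0 := by
  induction n with
  | zero => exact one_ne_zero
  | succ m ih => exact mul_ne_zero (qintT_ne_zero (m+1) (by omega)) ih

/-- The key multiplicativity identity for `q`-binomials, proved in `ℤ[T,T⁻¹]`
by cancellation against nonzero `q`-factorials. -/
lemma keyT (b c d : ℕ) :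
    qbinomU uT (b+c+d) (b+c) * qbinomU uT (b+c) b
      = qbinomU uT (b+c+d) b * qbinomU uT (c+d) c := by
  have hb := qfactT_ne_zero b
  have hc := qfactT_ne_zero c
  have hd := qfactT_ne_zero d
  apply mul_right_cancel₀ (mul_ne_zero (mul_ne_zero hb hc) hd)
  have L1 := qbinomU_mul_qfact uT (b+c) d
  have L2 := qbinomU_mul_qfact uT b c
  have R1 := qbinomU_mul_qfact uT b (c+d)
  have R2 := qbinomU_mul_qfact uT c d
  calc qbinomU uT (b+c+d) (b+c) * qbinomU uT (b+c) b *
        (qfactU uT b * qfactU uT c * qfactU uT d)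
      = qbinomU uT ((b+c)+d) (b+c) * (qbinomU uT (b+c) b * qfactU uT b * qfactU uT c)
          * qfactU uT d := by ring_nf
    _ = qbinomU uT ((b+c)+d) (b+c) * qfactU uT (b+c) * qfactU uT d := by rw [L2]
    _ = qfactU uT ((b+c)+d) := L1
    _ = qfactU uT (b+(c+d)) := by rw [Nat.add_assoc]
    _ = qbinomU uT (b+(c+d)) b * qfactU uT b * qfactU uT (c+d) := R1.symm
    _ = qbinomU uT (b+(c+d)) b * qfactU uT b * (qbinomU uT (c+d) c * qfactU uT c * qfactU uT d) := by
        rw [R2]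
    _ = qbinomU uT (b+c+d) b * qbinomU uT (c+d) c *
        (qfactU uT b * qfactU uT c * qfactU uT d) := by rw [← Nat.add_assoc]; ring

/-! ### Transfer to an arbitrary field -/

section hom
variable {K : Type*} [Field K]

noncomputable def phiK (q : K) (hq : q ≠ 0) : LaurentPolynomial ℤ →+* K :=
  (AddMonoidAlgebra.lift ℤ K ℤ ((Units.coeHom K).comp (zpowersHom Kˣ (Units.mk0 q hq)))).toRingHom

lemma phiK_T (q : K) (hq : q ≠ 0) (z : ℤ) : phiK q hq (LaurentPolynomial.T z) = q ^ z := by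
  have h0 : LaurentPolynomial.T (R := ℤ) z = AddMonoidAlgebra.single z (1 : ℤ) := rfl
  rw [phiK, h0]
  have h1 := AddMonoidAlgebra.lift_single
    ((Units.coeHom K).comp (zpowersHom Kˣ (Units.mk0 q hq))) z (1:ℤ)
  simp only [AlgHom.toRingHom_eq_coe, RingHom.coe_coe]
  rw [h1]
  simp [zpowersHom, zmultiplesHom, Units.val_zpow_eq_zpow_val]

lemma qbinom_eq_qbinomU (q : K) (hq : q ≠ 0) (n k : ℕ) :
    qbinom q n k = qbinomU (Units.mk0 q hq) n k := by
  induction n generalizing k with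
  | zero =>
      cases k with
      | zero => rfl
      | succ k => rfl
  | succ m ih =>
      cases k with
      | zero => rfl
      | succ r =>
          rw [qbinom, qbinomU, ih, ih]
          congr 2 <;> rw [Units.val_zpow_eq_zpow_val, Units.val_mk0]

lemma qbinomU_mk0_eq (q : K) (hq : q ≠ 0) (n k : ℕ) :
    qbinomU (Units.mk0 q hq) n k = phiK q hq (qbinomU uT n k) := by
  have hu : Units.map ((phiK q hq : LaurentPolynomial ℤ →+* K) : LaurentPolynomial ℤ →* K) uT
      = Units.mk0 q hq := by
    ext
    simp only [Units.coe_map, MonoidHom.coe_coe, uT_val, Units.val_mk0]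
    rw [phiK_T q hq 1, zpow_one]
  rw [← hu, qbinomU_map]

/-- The key identity, over any field. -/
lemma key_qbinom (q : K) (hq : q ≠ 0) (b c d : ℕ) :
    qbinom q (b+c+d) (b+c) * qbinom q (b+c) b = qbinom q (b+c+d) b * qbinom q (c+d) c := by
  rw [qbinom_eq_qbinomU q hq, qbinom_eq_qbinomU q hq, qbinom_eq_qbinomU q hq,
    qbinom_eq_qbinomU q hq, qbinomU_mk0_eq, qbinomU_mk0_eq, qbinomU_mk0_eq, qbinomU_mk0_eq,
    ← map_mul, ← map_mul, keyT]
end hom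

/-! ### Bi-additivity of `pstar` and multiplicativity of `qmb` -/

lemma pstar_add_left {m : ℕ} (β γ δ : Fin m → ℕ) :
    pstar (β + γ) δ = pstar β δ + pstar γ δ := by
  unfold pstar
  rw [← Finset.sum_add_distrib]
  apply Finset.sum_congr rfl; intro i _
  rw [← Finset.sum_add_distrib]
  apply Finset.sum_congr rfl; intro j _
  split_ifs <;> simp [Pi.add_apply, add_mul]

lemma pstar_add_right {m : ℕ} (β γ δ : Fin m → ℕ) :
    pstar β (γ + δ) = pstar β γ + pstar β δ := by
  unfold pstar
  rw [← Finset.sum_add_distrib]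
  apply Finset.sum_congr rfl; intro i _
  rw [← Finset.sum_add_distrib]
  apply Finset.sum_congr rfl; intro j _
  split_ifs <;> simp [Pi.add_apply, mul_add]

lemma qmb_key {K : Type*} [Field K] (q : K) (hq : q ≠ 0) {m : ℕ} (β γ δ : Fin m → ℕ) :
    qmb q (β + γ) δ * qmb q β γ = qmb q β (γ + δ) * qmb q γ δ := by
  unfold qmb
  rw [← Finset.prod_mul_distrib, ← Finset.prod_mul_distrib]
  apply Finset.prod_congr rfl
  intro i _
  have := key_qbinom q hq (β i) (γ i) (δ i)
  simpa [Pi.add_apply, Nat.add_assoc] using this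

/-! ### The structure constants -/

noncomputable def sc {K : Type*} [Field K] (q : K) {m : ℕ} (β γ : Fin m → ℕ) : K :=
  q ^ pstar β γ * qmb q β γ

lemma sc_key {K : Type*} [Field K] (q : K) (hq : q ≠ 0) {m : ℕ} (β γ δ : Fin m → ℕ) :
    sc q β γ * sc q (β + γ) δ = sc q γ δ * sc q β (γ + δ) := by
  unfold sc
  rw [pstar_add_left, pstar_add_right, pow_add, pow_add]
  have hk := qmb_key q hq β γ δ
  calc q ^ pstar β γ * qmb q β γ * (q ^ pstar β δ * q ^ pstar γ δ * qmb q (β + γ) δ)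
      = q ^ pstar β γ * q ^ pstar β δ * q ^ pstar γ δ * (qmb q (β + γ) δ * qmb q β γ) := by ring
    _ = q ^ pstar β γ * q ^ pstar β δ * q ^ pstar γ δ * (qmb q β (γ + δ) * qmb q γ δ) := by
        rw [hk]
    _ = q ^ pstar γ δ * qmb q γ δ * (q ^ pstar β γ * q ^ pstar β δ * qmb q β (γ + δ)) := by ring

/-! ### Finsupp bilinearity of `dpMul` -/

section bil
variable {K : Type*} [Field K] (q : K) {m : ℕ}

lemma dpMul_def (f g : (Fin m → ℕ) →₀ K) :
    dpMul q f g = f.sum fun β a => g.sum fun γ b =>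
      Finsupp.single (β + γ) (a * b * sc q β γ) := by
  unfold dpMul sc
  apply Finsupp.sum_congr
  intro β _
  apply Finsupp.sum_congr
  intro γ _
  rw [mul_assoc]

@[simp] lemma dpMul_zero_left (g : (Fin m → ℕ) →₀ K) : dpMul q 0 g = 0 := by
  simp [dpMul]

@[simp] lemma dpMul_zero_right (f : (Fin m → ℕ) →₀ K) : dpMul q f 0 = 0 := by
  simp [dpMul]

lemma dpMul_single_single (β γ : Fin m → ℕ) (a b : K) :
    dpMul q (Finsupp.single β a) (Finsupp.single γ b)
      = Finsupp.single (β + γ) (a * b * sc q β γ) := by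
  rw [dpMul_def]
  rw [Finsupp.sum_single_index (by simp), Finsupp.sum_single_index (by simp)]

lemma dpMul_add_left (f₁ f₂ g : (Fin m → ℕ) →₀ K) :
    dpMul q (f₁ + f₂) g = dpMul q f₁ g + dpMul q f₂ g := by
  rw [dpMul_def, dpMul_def, dpMul_def]
  rw [Finsupp.sum_add_index]
  · intro β _; simp
  · intro β _ a₁ a₂
    rw [← Finsupp.sum_add]
    apply Finsupp.sum_congr
    intro γ _
    rw [← Finsupp.single_add]
    congr 1
    ring

lemma dpMul_add_right (f g₁ g₂ : (Fin m → ℕ) →₀ K) :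
    dpMul q f (g₁ + g₂) = dpMul q f g₁ + dpMul q f g₂ := by
  rw [dpMul_def, dpMul_def, dpMul_def, ← Finsupp.sum_add]
  apply Finsupp.sum_congr
  intro β _
  rw [Finsupp.sum_add_index]
  · intro γ _; simp
  · intro γ _ b₁ b₂
    rw [← Finsupp.single_add]
    congr 1
    ring
end bil

/-- The multiplication of the quantum divided power algebra `𝒜_q(m)` is associative. -/
theorem dpMul_assoc
    {K : Type*} [Field K] (q : K) (hq : q ≠ 0) (m : ℕ)
    (f g h : (Fin m → ℕ) →₀ K) :
    dpMul q (dpMul q f g) h = dpMul q f (dpMul q g h) := by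
  induction f using Finsupp.induction_linear with
  | zero => simp
  | add f₁ f₂ h₁ h₂ => rw [dpMul_add_left, dpMul_add_left, dpMul_add_left, h₁, h₂]
  | single β a =>
  induction g using Finsupp.induction_linear with
  | zero => simp
  | add g₁ g₂ h₁ h₂ => rw [dpMul_add_right, dpMul_add_left, dpMul_add_left, dpMul_add_right, h₁, h₂]
  | single γ b =>
  induction h using Finsupp.induction_linear with
  | zero => simp
  | add h₁ h₂ e₁ e₂ => rw [dpMul_add_right, dpMul_add_right, dpMul_add_right, e₁, e₂]
  | single δ c =>
  rw [dpMul_single_single, dpMul_single_single, dpMul_single_single, dpMul_single_single]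
  rw [add_assoc]
  congr 1
  have := sc_key q hq β γ δ
  calc a * b * sc q β γ * c * sc q (β + γ) δ
      = a * b * c * (sc q β γ * sc q (β + γ) δ) := by ring
    _ = a * b * c * (sc q γ δ * sc q β (γ + δ)) := by rw [this]
    _ = a * (b * c * sc q γ δ) * sc q β (γ + δ) := by ring
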